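/- arXiv:1601.02798 — 2 statements merged into one kernel-verified Lean document; each statement's English description precedes it below -/
import Mathlib

section
/- Let σ:[a,b]²→ℝ satisfy Assumption 1 with exponent κ∈(0,2), function ω and c(t):=−(∂ω/∂z)(t,t,0). Then there exist a constant M₁<∞ and δ₀>0 such that for all 0<δ≤δ₀ and all t∈[a+δ,b−δ]: |σ(t,t)−(1/2)σ(t,t−δ)−(1/2)σ(t,t+δ) − δ^κ c(t)| ≤ M₁ δ^{min{2κ,2}}. -/
/-!
Write the three values of `σ` as values of `ω` at `(t, t, 0)` and `(t, t ± δ, δ^κ)`. Expanding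
`ω` to first order around `(t, t, δ^κ)` in the directions `±(0, δ, 0)`, the two linear terms
cancel; expanding around `(t, t, 0)` in the direction `(0, 0, δ^κ)`, the linear term is
`-δ^κ c(t)`. Since `ω` is `C²` near the compact convex box `[a,b]² × [0, b-a]`, its derivative is
Lipschitz there, so the three remainders are `O(δ^{2κ})`, `O(δ²)`, `O(δ²)`.
-/

open MeasureTheory

/-- Assumption 1 of the paper: the covariance function `σ` on `[a,b]²` can be written as
`σ(t,s) = ω(t,s,|t-s|^κ)` for a function `ω` that is twice continuously differentiable on
an open set `Ω ⊇ [a,b]² × [0, b-a]`, with `0 < κ < 2`, where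
`c(t) = -(∂ω/∂z)(t,t,0)` satisfies `inf_{t∈[a,b]} c(t) > 0`. -/
structure Assumption1 (a b κ : ℝ) (σ : ℝ → ℝ → ℝ) (w : ℝ × ℝ × ℝ → ℝ) (c : ℝ → ℝ) :
    Prop where
  lt : a < b
  κ_pos : 0 < κ
  κ_lt_two : κ < 2
  smooth : ∃ Ω : Set (ℝ × ℝ × ℝ), IsOpen Ω ∧
    (Set.Icc a b ×ˢ Set.Icc a b ×ˢ Set.Icc (0 : ℝ) (b - a)) ⊆ Ω ∧ ContDiffOn ℝ 2 w Ω
  σ_eq : ∀ t ∈ Set.Icc a b, ∀ s ∈ Set.Icc a b, σ t s = w (t, s, |t - s| ^ κ)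
  deriv_z : ∀ t ∈ Set.Icc a b, HasDerivAt (fun z => w (t, t, z)) (-(c t)) 0
  c_inf_pos : ∃ c₀ > 0, ∀ t ∈ Set.Icc a b, c₀ ≤ c t

/-- `g_{δ,t}(s) = σ(s,t) - ½σ(s,t-δ) - ½σ(s,t+δ)`, the covariance of `X(s)` with
`Z_δ(X,t) = X(t) - ½(X(t-δ)+X(t+δ))` for a centered process `X` with covariance `σ`. -/
noncomputable def gdelta (σ : ℝ → ℝ → ℝ) (δ t s : ℝ) : ℝ :=
  σ s t - (1 / 2) * σ s (t - δ) - (1 / 2) * σ s (t + δ)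

/-- `V_δ(t) = Var(Z_δ(X,t))` expressed via the covariance function `σ`. -/
noncomputable def Vdelta (σ : ℝ → ℝ → ℝ) (δ t : ℝ) : ℝ :=
  σ t t + (1 / 4) * σ (t - δ) (t - δ) + (1 / 4) * σ (t + δ) (t + δ)
    - σ t (t - δ) - σ t (t + δ) + (1 / 2) * σ (t - δ) (t + δ)

open scoped NNReal

section SecondDifference

variable {E F : Type*} [NormedAddCommGroup E] [NormedSpace ℝ E]
  [NormedAddCommGroup F] [NormedSpace ℝ F]
  {s : Set E} {f : E → F} {f' : E → E →L[ℝ] F} {C : ℝ≥0}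

theorem Convex.norm_sub_sub_fderiv_le_of_lipschitzOnWith (hs : Convex ℝ s)
    (hf : ∀ x ∈ s, HasFDerivWithinAt f (f' x) s x) (hf' : LipschitzOnWith C f' s)
    {p q : E} (hp : p ∈ s) (hq : q ∈ s) :
    ‖f q - f p - f' p (q - p)‖ ≤ C * ‖q - p‖ ^ 2 := by
  have hseg : segment ℝ p q ⊆ s := hs.segment_subset hp hq
  have hbound : ∀ x ∈ segment ℝ p q, ‖f' x - f' p‖ ≤ C * ‖q - p‖ := by
    intro x hx
    calc ‖f' x - f' p‖ ≤ C * ‖x - p‖ := hf'.norm_sub_le (hseg hx) hp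
      _ ≤ C * ‖q - p‖ := by
        gcongr
        obtain ⟨θ, hθ, rfl⟩ := (segment_eq_image' ℝ p q ▸ hx : _)
        rw [add_sub_cancel_left, norm_smul, Real.norm_of_nonneg hθ.1]
        exact mul_le_of_le_one_left (norm_nonneg _) hθ.2
  calc ‖f q - f p - f' p (q - p)‖ ≤ C * ‖q - p‖ * ‖q - p‖ :=
        (convex_segment p q).norm_image_sub_le_of_norm_hasFDerivWithin_le'
          (fun x hx => (hf x (hseg hx)).mono hseg) hbound
          (left_mem_segment ℝ p q) (right_mem_segment ℝ p q)
    _ = C * ‖q - p‖ ^ 2 := by ring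

theorem Convex.norm_second_diff_le_of_lipschitzOnWith (hs : Convex ℝ s)
    (hf : ∀ x ∈ s, HasFDerivWithinAt f (f' x) s x) (hf' : LipschitzOnWith C f' s)
    {p u v : E} (hp : p ∈ s) (hplus : p + u + v ∈ s) (hminus : p + u - v ∈ s) :
    ‖f p - (2⁻¹ : ℝ) • (f (p + u + v) + f (p + u - v)) + f' p u‖
      ≤ C * (‖u‖ ^ 2 + ‖v‖ ^ 2) := by
  have hmid : p + u ∈ s := by
    convert hs hplus hminus (by norm_num : (0 : ℝ) ≤ 2⁻¹) (by norm_num : (0 : ℝ) ≤ 2⁻¹)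
      (by norm_num) using 1
    rw [← smul_add]; module
  have hA := hs.norm_sub_sub_fderiv_le_of_lipschitzOnWith hf hf' hp hmid
  have hBplus := hs.norm_sub_sub_fderiv_le_of_lipschitzOnWith hf hf' hmid hplus
  have hBminus := hs.norm_sub_sub_fderiv_le_of_lipschitzOnWith hf hf' hmid hminus
  simp only [add_sub_cancel_left, sub_sub_cancel_left, norm_neg] at hA hBplus hBminus
  have hsplit : f p - (2⁻¹ : ℝ) • (f (p + u + v) + f (p + u - v)) + f' p u
      = -(f (p + u) - f p - f' p u)
        - (2⁻¹ : ℝ) • ((f (p + u + v) - f (p + u) - f' (p + u) v)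
          + (f (p + u - v) - f (p + u) - f' (p + u) (-v))) := by
    rw [map_neg]; module
  calc _ ≤ ‖f (p + u) - f p - f' p u‖
        + 2⁻¹ * (‖f (p + u + v) - f (p + u) - f' (p + u) v‖
          + ‖f (p + u - v) - f (p + u) - f' (p + u) (-v)‖) := by
        rw [hsplit]
        refine (norm_sub_le _ _).trans ?_
        rw [norm_neg, norm_smul, Real.norm_of_nonneg (by norm_num)]
        gcongr
        exact norm_add_le _ _
    _ ≤ C * ‖u‖ ^ 2 + 2⁻¹ * (C * ‖v‖ ^ 2 + C * ‖v‖ ^ 2) := by gcongr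
    _ = C * (‖u‖ ^ 2 + ‖v‖ ^ 2) := by ring

theorem ContDiffOn.exists_norm_second_diff_le {Ω K : Set E} (hf : ContDiffOn ℝ 2 f Ω)
    (hΩ : IsOpen Ω) (hK : Convex ℝ K) (hKc : IsCompact K) (hKΩ : K ⊆ Ω) :
    ∃ C : ℝ≥0, ∀ p u v, p ∈ K → p + u + v ∈ K → p + u - v ∈ K →
      ‖f p - (2⁻¹ : ℝ) • (f (p + u + v) + f (p + u - v)) + fderiv ℝ f p u‖
        ≤ C * (‖u‖ ^ 2 + ‖v‖ ^ 2) := by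
  obtain ⟨C, hC⟩ := ((hf.fderiv_of_isOpen hΩ (by norm_num)).mono hKΩ).exists_lipschitzOnWith
    one_ne_zero hK hKc
  have hdiff : ∀ x ∈ K, HasFDerivWithinAt f (fderiv ℝ f x) K x := fun x hx =>
    ((hf.differentiableOn (by norm_num)).differentiableAt (hΩ.mem_nhds (hKΩ hx))).hasFDerivAt
      |>.hasFDerivWithinAt
  exact ⟨C, fun p u v => hK.norm_second_diff_le_of_lipschitzOnWith hdiff hC⟩

end SecondDifference

theorem Real.rpow_sq_add_sq_le {δ : ℝ} (hδ : 0 < δ) (hδ₁ : δ ≤ 1) (κ : ℝ) :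
    (δ ^ κ) ^ 2 + δ ^ 2 ≤ 2 * δ ^ min (2 * κ) 2 := by
  have h2κ : (δ ^ κ) ^ 2 = δ ^ (2 * κ) := by
    rw [← Real.rpow_natCast, ← Real.rpow_mul hδ.le, mul_comm]; norm_num
  have h2 : δ ^ 2 = δ ^ (2 : ℝ) := (Real.rpow_natCast δ 2).symm
  rw [h2κ, h2]
  linarith [Real.rpow_le_rpow_of_exponent_ge hδ hδ₁ (min_le_left (2 * κ) 2),
    Real.rpow_le_rpow_of_exponent_ge hδ hδ₁ (min_le_right (2 * κ) 2)]

namespace Assumption1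

variable {a b κ : ℝ} {σ : ℝ → ℝ → ℝ} {w : ℝ × ℝ × ℝ → ℝ} {c : ℝ → ℝ}

theorem fderiv_apply_diag (h : Assumption1 a b κ σ w c) {t : ℝ} (ht : t ∈ Set.Icc a b)
    (hw : DifferentiableAt ℝ w (t, t, 0)) (z : ℝ) :
    fderiv ℝ w (t, t, 0) (0, 0, z) = -(z * c t) := by
  have hline : HasDerivAt (fun u : ℝ => (t, t, u)) ((0 : ℝ), (0 : ℝ), (1 : ℝ)) 0 :=
    (hasDerivAt_const _ _).prodMk ((hasDerivAt_const _ _).prodMk (hasDerivAt_id _))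
  have hunit : fderiv ℝ w (t, t, 0) (0, 0, 1) = -(c t) :=
    (hw.hasFDerivAt.comp_hasDerivAt 0 hline).unique (h.deriv_z t ht)
  rw [show ((0 : ℝ), (0 : ℝ), z) = z • ((0 : ℝ), (0 : ℝ), (1 : ℝ)) by simp, map_smul, hunit,
    smul_eq_mul, mul_neg]

theorem sigma_sub_half_sub_half (h : Assumption1 a b κ σ w c) {t δ : ℝ} (hδ : 0 < δ)
    (ht : t ∈ Set.Icc a b) (htm : t - δ ∈ Set.Icc a b) (htp : t + δ ∈ Set.Icc a b) :
    σ t t - (1 / 2) * σ t (t - δ) - (1 / 2) * σ t (t + δ)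
      = w (t, t, 0) - 2⁻¹ * (w (t, t + δ, δ ^ κ) + w (t, t - δ, δ ^ κ)) := by
  rw [h.σ_eq t ht t ht, h.σ_eq t ht _ htm, h.σ_eq t ht _ htp, sub_self, abs_zero,
    Real.zero_rpow h.κ_pos.ne', sub_sub_cancel, sub_add_cancel_left, abs_neg, abs_of_pos hδ]
  ring

theorem exists_abs_diag_expansion_le (h : Assumption1 a b κ σ w c) :
    ∃ C : ℝ≥0, ∀ t δ, 0 < δ → δ ^ κ ≤ b - a →
      t ∈ Set.Icc a b → t - δ ∈ Set.Icc a b → t + δ ∈ Set.Icc a b →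
      |σ t t - (1 / 2) * σ t (t - δ) - (1 / 2) * σ t (t + δ) - δ ^ κ * c t|
        ≤ C * ((δ ^ κ) ^ 2 + δ ^ 2) := by
  obtain ⟨Ω, hΩ, hKΩ, hw⟩ := h.smooth
  obtain ⟨C, hC⟩ := hw.exists_norm_second_diff_le hΩ
    ((convex_Icc _ _).prod ((convex_Icc _ _).prod (convex_Icc _ _)))
    (isCompact_Icc.prod (isCompact_Icc.prod isCompact_Icc)) hKΩ
  refine ⟨C, fun t δ hδ hz htt htm htp => ?_⟩
  have hzK : δ ^ κ ∈ Set.Icc 0 (b - a) := ⟨by positivity, hz⟩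
  have hdiag : ((t, t, 0) : ℝ × ℝ × ℝ) ∈ Set.Icc a b ×ˢ Set.Icc a b ×ˢ Set.Icc 0 (b - a) :=
    ⟨htt, htt, le_rfl, (sub_pos.2 h.lt).le⟩
  have hplus : ((t, t, 0) + (0, 0, δ ^ κ) + (0, δ, 0) : ℝ × ℝ × ℝ) = (t, t + δ, δ ^ κ) := by
    simp
  have hminus : ((t, t, 0) + (0, 0, δ ^ κ) - (0, δ, 0) : ℝ × ℝ × ℝ) = (t, t - δ, δ ^ κ) := by
    simp
  have key := hC (t, t, 0) (0, 0, δ ^ κ) (0, δ, 0) hdiag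
    (hplus ▸ ⟨htt, htp, hzK⟩) (hminus ▸ ⟨htt, htm, hzK⟩)
  rw [hplus, hminus, h.fderiv_apply_diag htt
    ((hw.differentiableOn (by norm_num)).differentiableAt (hΩ.mem_nhds (hKΩ hdiag)))] at key
  calc |σ t t - (1 / 2) * σ t (t - δ) - (1 / 2) * σ t (t + δ) - δ ^ κ * c t|
      = ‖w (t, t, 0) - (2⁻¹ : ℝ) • (w (t, t + δ, δ ^ κ) + w (t, t - δ, δ ^ κ))
          + -(δ ^ κ * c t)‖ := by
        rw [h.sigma_sub_half_sub_half hδ htt htm htp, Real.norm_eq_abs, smul_eq_mul,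
          ← sub_eq_add_neg]
    _ ≤ C * ((δ ^ κ) ^ 2 + δ ^ 2) := by simpa [Prod.norm_def, abs_of_pos hδ, hδ.le] using key

end Assumption1

/-- expansion (A.4) of the paper: under Assumption 1 there are `M₁ < ∞`
and `δ₀ > 0` such that for all `0 < δ ≤ δ₀` and `t ∈ [a+δ, b-δ]`,
`|σ(t,t) - ½σ(t,t-δ) - ½σ(t,t+δ) - δ^κ c(t)| ≤ M₁ δ^{min(2κ,2)}`;
the quantity bounded is `E(X(t) Z_δ(X,t)) - δ^κ c(t)`. -/
theorem gdelta_diag_expansion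
    (a b κ : ℝ) (σ : ℝ → ℝ → ℝ) (w : ℝ × ℝ × ℝ → ℝ) (c : ℝ → ℝ)
    (h : Assumption1 a b κ σ w c) :
    ∃ M₁ : ℝ, ∃ δ₀ > 0, ∀ δ, 0 < δ → δ ≤ δ₀ → ∀ t ∈ Set.Icc (a + δ) (b - δ),
      |σ t t - (1 / 2) * σ t (t - δ) - (1 / 2) * σ t (t + δ) - δ ^ κ * c t|
        ≤ M₁ * δ ^ min (2 * κ) 2 := by
  obtain ⟨C, hC⟩ := h.exists_abs_diag_expansion_le
  have hba : 0 < b - a := sub_pos.2 h.lt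
  refine ⟨2 * C, min 1 ((b - a) ^ κ⁻¹), lt_min one_pos (Real.rpow_pos_of_pos hba _), ?_⟩
  intro δ hδ hδ₀ t ⟨hat, htb⟩
  have hz : δ ^ κ ≤ b - a :=
    (Real.le_rpow_inv_iff_of_pos hδ.le hba.le h.κ_pos).1 (hδ₀.trans (min_le_right _ _))
  calc _ ≤ C * ((δ ^ κ) ^ 2 + δ ^ 2) :=
        hC t δ hδ hz ⟨by linarith, by linarith⟩ ⟨by linarith, by linarith⟩
          ⟨by linarith, by linarith⟩
    _ ≤ C * (2 * δ ^ min (2 * κ) 2) := by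
        gcongr; exact Real.rpow_sq_add_sq_le hδ (hδ₀.trans (min_le_left _ _)) κ
    _ = 2 * C * δ ^ min (2 * κ) 2 := by ring
end

section
/- Let σ:[a,b]²→ℝ satisfy Assumption 1 with exponent κ∈(0,2), function ω and c(t):=−(∂ω/∂z)(t,t,0), and set g_{δ,t}(s):=σ(s,t)−(1/2)σ(s,t−δ)−(1/2)σ(s,t+δ). Then for every 0<C<∞ there exist a constant M<∞ and δ₀>0 such that for all 0<δ≤δ₀, all u∈[−C,C], and all t∈[a+(1+C)δ, b−(1+C)δ]: |g_{δ,t}(t+uδ) + c(t)δ^κ(|u|^κ − (1/2)|u+1|^κ − (1/2)|u−1|^κ)| ≤ M δ^{min{2κ,2}}. -/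
open MeasureTheory

/-!
Write `σ(s, t') = ω(s, t', |s - t'|^κ)` and expand `ω` to first order at the diagonal point
`(t, t, 0)`. In `g_{δ,t}(t + uδ)` the first-order terms in the first two coordinates cancel, because
the weights `1, -½, -½` sum to zero and the second coordinates `0, -δ, δ` are balanced, while the
third coordinate contributes exactly `-c(t) δ^κ (|u|^κ - ½|u+1|^κ - ½|u-1|^κ)`. The three points
lie at sup-distance `O(δ + δ^κ) = O(δ^{min(κ,1)})` from `(t, t, 0)`, and `∇ω` is Lipschitz on the
compact convex box, so each Taylor remainder is `O(δ^{2 min(κ,1)}) = O(δ^{min(2κ,2)})`.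
-/

open Set NNReal

theorem Convex.norm_image_sub_sub_le_of_lipschitzOnWith {E F : Type*} [NormedAddCommGroup E]
    [NormedSpace ℝ E] [NormedAddCommGroup F] [NormedSpace ℝ F] {f : E → F}
    {f' : E → E →L[ℝ] F} {s : Set E} {L : ℝ≥0} (hs : Convex ℝ s)
    (hf : ∀ x ∈ s, HasFDerivWithinAt f (f' x) s x) (hf' : LipschitzOnWith L f' s)
    {x y : E} (hx : x ∈ s) (hy : y ∈ s) :
    ‖f y - f x - f' x (y - x)‖ ≤ L * ‖y - x‖ ^ 2 := by
  have hseg : segment ℝ x y ⊆ s := hs.segment_subset hx hy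
  have hderiv : ∀ z ∈ segment ℝ x y,
      HasFDerivWithinAt (fun z => f z - f' x z) (f' z - f' x) (segment ℝ x y) z :=
    fun z hz => ((hf z (hseg hz)).mono hseg).sub (f' x).hasFDerivWithinAt
  have hbound : ∀ z ∈ segment ℝ x y, ‖f' z - f' x‖ ≤ L * ‖y - x‖ := fun z hz =>
    hf'.norm_sub_le_of_le (hseg hz) hx (norm_sub_le_of_mem_segment hz)
  calc ‖f y - f x - f' x (y - x)‖ = ‖(f y - f' x y) - (f x - f' x x)‖ := by
        rw [map_sub]; congr 1; abel
    _ ≤ L * ‖y - x‖ * ‖y - x‖ :=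
        (convex_segment x y).norm_image_sub_le_of_norm_hasFDerivWithin_le hderiv hbound
          (left_mem_segment ℝ x y) (right_mem_segment ℝ x y)
    _ = L * ‖y - x‖ ^ 2 := by ring

theorem norm_le_mul_rpow_min {κ δ A x y v : ℝ} (hκ : 0 < κ) (hδ : 0 < δ) (hδ1 : δ ≤ 1)
    (hx : |x| ≤ A * δ) (hy : |y| ≤ A * δ) (hv : |v| ≤ A * δ) :
    ‖((x, y, |v| ^ κ) : ℝ × ℝ × ℝ)‖ ≤ (A + A ^ κ) * δ ^ min κ 1 := by
  have hA : 0 ≤ A := (mul_nonneg_iff_of_pos_right hδ).1 ((abs_nonneg x).trans hx)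
  have hAκ : 0 ≤ A ^ κ := Real.rpow_nonneg hA κ
  have hδ_le : δ ≤ δ ^ min κ 1 := by
    simpa using Real.rpow_le_rpow_of_exponent_ge hδ hδ1 (min_le_right κ 1)
  have hδκ_le : δ ^ κ ≤ δ ^ min κ 1 := Real.rpow_le_rpow_of_exponent_ge hδ hδ1 (min_le_left κ 1)
  have hlin : A * δ ≤ (A + A ^ κ) * δ ^ min κ 1 := by
    nlinarith [Real.rpow_nonneg hδ.le (min κ 1)]
  have hpow : |v| ^ κ ≤ (A + A ^ κ) * δ ^ min κ 1 :=
    calc |v| ^ κ ≤ (A * δ) ^ κ := Real.rpow_le_rpow (abs_nonneg v) hv hκ.le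
      _ = A ^ κ * δ ^ κ := Real.mul_rpow hA hδ.le
      _ ≤ (A + A ^ κ) * δ ^ min κ 1 := by nlinarith [Real.rpow_nonneg hδ.le κ]
  simp only [Prod.norm_def, Real.norm_eq_abs, abs_of_nonneg (Real.rpow_nonneg (abs_nonneg v) κ)]
  exact max_le (hx.trans hlin) (max_le (hy.trans hlin) hpow)

noncomputable def diagonalRemainder (σ : ℝ → ℝ → ℝ) (w : ℝ × ℝ × ℝ → ℝ) (κ t s t' : ℝ) : ℝ :=
  σ s t' - w (t, t, 0) - fderiv ℝ w (t, t, 0) (s - t, t' - t, |s - t'| ^ κ)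

theorem gdelta_eq_fderiv_add_diagonalRemainder (σ : ℝ → ℝ → ℝ) (w : ℝ × ℝ × ℝ → ℝ)
    (κ δ t s : ℝ) :
    gdelta σ δ t s = fderiv ℝ w (t, t, 0) (0, 0, 1) *
        (|s - t| ^ κ - 1 / 2 * |s - (t - δ)| ^ κ - 1 / 2 * |s - (t + δ)| ^ κ)
      + (diagonalRemainder σ w κ t s t - 1 / 2 * diagonalRemainder σ w κ t s (t - δ)
        - 1 / 2 * diagonalRemainder σ w κ t s (t + δ)) := by
  have hv : ((s - t, t - t, |s - t| ^ κ) : ℝ × ℝ × ℝ)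
      - (1 / 2 : ℝ) • (s - t, t - δ - t, |s - (t - δ)| ^ κ)
      - (1 / 2 : ℝ) • (s - t, t + δ - t, |s - (t + δ)| ^ κ)
      = (|s - t| ^ κ - 1 / 2 * |s - (t - δ)| ^ κ - 1 / 2 * |s - (t + δ)| ^ κ) • (0, 0, 1) := by
    ext <;> simp; ring
  have hlin := congrArg (fderiv ℝ w (t, t, 0)) hv
  simp only [map_sub, map_smul, smul_eq_mul] at hlin
  unfold gdelta diagonalRemainder
  linear_combination hlin

namespace Assumption1

variable {a b κ : ℝ} {σ : ℝ → ℝ → ℝ} {w : ℝ × ℝ × ℝ → ℝ} {c : ℝ → ℝ}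

theorem hasFDerivAt (h : Assumption1 a b κ σ w c) {p : ℝ × ℝ × ℝ}
    (hp : p ∈ Icc a b ×ˢ Icc a b ×ˢ Icc 0 (b - a)) : HasFDerivAt w (fderiv ℝ w p) p := by
  obtain ⟨Ω, hΩ, hKΩ, hw⟩ := h.smooth
  exact ((hw.differentiableOn (by norm_num)).differentiableAt (hΩ.mem_nhds (hKΩ hp))).hasFDerivAt

theorem fderiv_diagonal_apply (h : Assumption1 a b κ σ w c) {t : ℝ} (ht : t ∈ Icc a b) :
    fderiv ℝ w (t, t, 0) (0, 0, 1) = -c t := by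
  have hcurve : HasDerivAt (fun z : ℝ => (t, t, z)) ((0 : ℝ), (0 : ℝ), (1 : ℝ)) 0 :=
    (hasDerivAt_const _ _).prodMk ((hasDerivAt_const _ _).prodMk (hasDerivAt_id _))
  have hp : (t, t, (0 : ℝ)) ∈ Icc a b ×ˢ Icc a b ×ˢ Icc 0 (b - a) :=
    ⟨ht, ht, left_mem_Icc.2 (sub_nonneg.2 h.lt.le)⟩
  exact ((h.hasFDerivAt hp).comp_hasDerivAt 0 hcurve).unique (h.deriv_z t ht)

theorem exists_lipschitzOnWith_fderiv (h : Assumption1 a b κ σ w c) :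
    ∃ L, LipschitzOnWith L (fderiv ℝ w) (Icc a b ×ˢ Icc a b ×ˢ Icc 0 (b - a)) := by
  obtain ⟨Ω, hΩ, hKΩ, hw⟩ := h.smooth
  exact ((hw.fderiv_of_isOpen (m := 1) hΩ (by norm_num)).mono hKΩ).exists_lipschitzOnWith
    one_ne_zero ((convex_Icc _ _).prod ((convex_Icc _ _).prod (convex_Icc _ _)))
    (isCompact_Icc.prod (isCompact_Icc.prod isCompact_Icc))

theorem exists_abs_diagonalRemainder_le (h : Assumption1 a b κ σ w c) :
    ∃ L : ℝ≥0, ∀ t ∈ Icc a b, ∀ s ∈ Icc a b, ∀ t' ∈ Icc a b, |s - t'| ^ κ ≤ b - a →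
      |diagonalRemainder σ w κ t s t'|
        ≤ L * ‖((s - t, t' - t, |s - t'| ^ κ) : ℝ × ℝ × ℝ)‖ ^ 2 := by
  obtain ⟨L, hL⟩ := h.exists_lipschitzOnWith_fderiv
  refine ⟨L, fun t ht s hs t' ht' hz => ?_⟩
  have hp : (t, t, (0 : ℝ)) ∈ Icc a b ×ˢ Icc a b ×ˢ Icc 0 (b - a) :=
    ⟨ht, ht, left_mem_Icc.2 (sub_nonneg.2 h.lt.le)⟩
  have hq : (s, t', |s - t'| ^ κ) ∈ Icc a b ×ˢ Icc a b ×ˢ Icc 0 (b - a) :=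
    ⟨hs, ht', Real.rpow_nonneg (abs_nonneg _) κ, hz⟩
  have hK : Convex ℝ (Icc a b ×ˢ Icc a b ×ˢ Icc 0 (b - a)) :=
    (convex_Icc _ _).prod ((convex_Icc _ _).prod (convex_Icc _ _))
  simpa [diagonalRemainder, h.σ_eq s hs t' ht'] using
    hK.norm_image_sub_sub_le_of_lipschitzOnWith (fun p hp => (h.hasFDerivAt hp).hasFDerivWithinAt)
      hL hp hq

theorem exists_abs_diagonalRemainder_le_rpow (h : Assumption1 a b κ σ w c) {C : ℝ}
    (hC : 0 ≤ C) :
    ∃ M, ∃ δ₀ > 0, ∀ δ, 0 < δ → δ ≤ δ₀ → ∀ u ∈ Icc (-C) C,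
      ∀ t ∈ Icc (a + (1 + C) * δ) (b - (1 + C) * δ), ∀ t', |t' - t| ≤ δ →
        |diagonalRemainder σ w κ t (t + u * δ) t'| ≤ M * δ ^ min (2 * κ) 2 := by
  obtain ⟨L, hL⟩ := h.exists_abs_diagonalRemainder_le
  set A := 1 + C
  have hA : 0 < A := by linarith
  refine ⟨L * (A + A ^ κ) ^ 2, min 1 ((b - a) ^ κ⁻¹ / A),
    lt_min one_pos (div_pos (Real.rpow_pos_of_pos (sub_pos.2 h.lt) _) hA), ?_⟩
  rintro δ hδ hδ₀ u ⟨hu₁, hu₂⟩ t ⟨ht₁, ht₂⟩ t' ht'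
  rw [abs_le] at ht'
  have hAδ : (A * δ) ^ κ ≤ b - a := by
    rw [← Real.le_rpow_inv_iff_of_pos (by positivity) (sub_pos.2 h.lt).le h.κ_pos,
      ← le_div_iff₀' hA]
    exact hδ₀.trans (min_le_right _ _)
  have hs : |t + u * δ - t| ≤ A * δ := by
    rw [add_sub_cancel_left, abs_le]; constructor <;> nlinarith
  have hst' : |t + u * δ - t'| ≤ A * δ := by rw [abs_le]; constructor <;> nlinarith
  have ht't : |t' - t| ≤ A * δ := by rw [abs_le]; constructor <;> nlinarith
  have hnorm := norm_le_mul_rpow_min h.κ_pos hδ (hδ₀.trans (min_le_left _ _)) hs ht't hst'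
  calc |diagonalRemainder σ w κ t (t + u * δ) t'|
      ≤ L * ‖((t + u * δ - t, t' - t, |t + u * δ - t'| ^ κ) : ℝ × ℝ × ℝ)‖ ^ 2 :=
        hL t ⟨by nlinarith, by nlinarith⟩ (t + u * δ) ⟨by nlinarith, by nlinarith⟩ t'
          ⟨by nlinarith, by nlinarith⟩
          ((Real.rpow_le_rpow (abs_nonneg _) hst' h.κ_pos.le).trans hAδ)
    _ ≤ L * ((A + A ^ κ) * δ ^ min κ 1) ^ 2 := by gcongr
    _ = L * (A + A ^ κ) ^ 2 * δ ^ min (2 * κ) 2 := by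
        rw [show min (2 * κ) 2 = min κ 1 * 2 by rw [min_mul_of_nonneg _ _ zero_le_two, one_mul,
          mul_comm], Real.rpow_mul hδ.le, Real.rpow_two]
        ring

end Assumption1

/-- expansion (A.7) of the paper: under Assumption 1, for every `0 < C < ∞`
there are `M < ∞` and `δ₀ > 0` such that for all `0 < δ ≤ δ₀`, all `u ∈ [-C, C]` and all
`t ∈ [a+(1+C)δ, b-(1+C)δ]`,
`|g_{δ,t}(t+uδ) + c(t) δ^κ (|u|^κ - ½|u+1|^κ - ½|u-1|^κ)| ≤ M δ^{min(2κ,2)}`. -/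
theorem gdelta_near_expansion
    (a b κ : ℝ) (σ : ℝ → ℝ → ℝ) (w : ℝ × ℝ × ℝ → ℝ) (c : ℝ → ℝ)
    (h : Assumption1 a b κ σ w c) :
    ∀ C : ℝ, 0 < C → ∃ M : ℝ, ∃ δ₀ > 0, ∀ δ, 0 < δ → δ ≤ δ₀ →
      ∀ u ∈ Set.Icc (-C) C, ∀ t ∈ Set.Icc (a + (1 + C) * δ) (b - (1 + C) * δ),
        |gdelta σ δ t (t + u * δ)
            + c t * δ ^ κ * (|u| ^ κ - (1 / 2) * |u + 1| ^ κ - (1 / 2) * |u - 1| ^ κ)|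
          ≤ M * δ ^ min (2 * κ) 2 := by
  intro C hC
  obtain ⟨M, δ₀, hδ₀, hM⟩ := h.exists_abs_diagonalRemainder_le_rpow hC.le
  refine ⟨2 * M, δ₀, hδ₀, fun δ hδ hδδ₀ u hu t ht => ?_⟩
  have hR := hM δ hδ hδδ₀ u hu t ht
  have h₀ := abs_le.1 (hR t (by simp [hδ.le]))
  have h₁ := abs_le.1 (hR (t - δ) (by simp [abs_of_pos hδ]))
  have h₂ := abs_le.1 (hR (t + δ) (by simp [abs_of_pos hδ]))
  have hscale : ∀ v : ℝ, |v * δ| ^ κ = |v| ^ κ * δ ^ κ := fun v => by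
    rw [abs_mul, abs_of_pos hδ, Real.mul_rpow (abs_nonneg v) hδ.le]
  rw [gdelta_eq_fderiv_add_diagonalRemainder σ w,
    h.fderiv_diagonal_apply ⟨by nlinarith [ht.1], by nlinarith [ht.2]⟩,
    show t + u * δ - t = u * δ by ring, show t + u * δ - (t - δ) = (u + 1) * δ by ring,
    show t + u * δ - (t + δ) = (u - 1) * δ by ring, hscale, hscale, hscale, abs_le]
  constructor <;> linarith
end
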